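/- arXiv:2202.10699 — 3 statements merged into one kernel-verified Lean document; each statement's English description precedes it below -/
import Mathlib

section
/- Let Λ ⊂ ℝⁿ be a nonempty compact convex set and φ : ℝⁿ → ℝ continuous. Define u(t,x) := max_{v∈Λ} φ(x + t v) for (t,x) ∈ [0,∞) × ℝⁿ. Then u satisfies the semigroup property: u(t+s, x) = max_{v∈Λ} u(t, x + s v) for all s,t ≥ 0 and x ∈ ℝⁿ. -/
/-!
Write `u t x = sup φ(x + tΛ)`. The right-hand side of the semigroup identity is a supremum of
suprema, i.e. the supremum of `φ` over `⋃_{w ∈ Λ} (x + s w + tΛ) = x + sΛ + tΛ`, and for convex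
`Λ` and `s, t ≥ 0` this set is `x + (t + s)Λ`. Compactness of `Λ` keeps all suprema finite.
-/

open Set Pointwise

theorem csSup_image_biUnion {ι α β : Type*} [ConditionallyCompleteLattice β] {f : α → β}
    {I : Set ι} {A : ι → Set α} (hI : I.Nonempty) (hA : ∀ i ∈ I, (A i).Nonempty)
    (hbdd : BddAbove (f '' ⋃ i ∈ I, A i)) :
    sSup (f '' ⋃ i ∈ I, A i) = sSup ((fun i => sSup (f '' A i)) '' I) := by
  have hsub : ∀ i ∈ I, f '' A i ⊆ f '' ⋃ i ∈ I, A i := fun i hi =>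
    image_mono (subset_biUnion_of_mem hi)
  have hle : ∀ i ∈ I, sSup (f '' A i) ≤ sSup (f '' ⋃ i ∈ I, A i) := fun i hi =>
    csSup_le_csSup hbdd ((hA i hi).image f) (hsub i hi)
  refine le_antisymm ?_ (csSup_le (hI.image _) (forall_mem_image.2 hle))
  obtain ⟨i₀, hi₀⟩ := hI
  refine csSup_le (((hA i₀ hi₀).image f).mono (hsub i₀ hi₀)) ?_
  rintro _ ⟨a, ha, rfl⟩
  obtain ⟨i, hi, ha⟩ := mem_iUnion₂.1 ha
  calc f a ≤ sSup (f '' A i) := le_csSup (hbdd.mono (hsub i hi)) (mem_image_of_mem f ha)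
    _ ≤ _ := le_csSup ⟨_, forall_mem_image.2 hle⟩ (mem_image_of_mem _ hi)

section VectorSpace

variable {E : Type*} [AddCommGroup E] [Module ℝ E]

theorem image_add_smul_eq_image_vadd_smul {F : Type*} (φ : E → F) (Λ : Set E) (t : ℝ) (x : E) :
    (fun v => φ (x + t • v)) '' Λ = φ '' (x +ᵥ t • Λ) := by
  rw [← image_smul, ← image_vadd, image_image, image_image]
  rfl

theorem Convex.biUnion_add_smul_vadd_smul {Λ : Set E} (hΛ : Convex ℝ Λ) {s t : ℝ}
    (hs : 0 ≤ s) (ht : 0 ≤ t) (x : E) :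
    ⋃ w ∈ Λ, (x + s • w) +ᵥ t • Λ = x +ᵥ (t + s) • Λ := by
  rw [hΛ.add_smul ht hs]
  ext y
  simp only [mem_iUnion, mem_vadd_set, mem_add, mem_smul_set, vadd_eq_add, exists_prop]
  constructor
  · rintro ⟨w, hw, _, ⟨v, hv, rfl⟩, rfl⟩
    exact ⟨_, ⟨_, ⟨v, hv, rfl⟩, _, ⟨w, hw, rfl⟩, rfl⟩, by abel⟩
  · rintro ⟨_, ⟨_, ⟨v, hv, rfl⟩, _, ⟨w, hw, rfl⟩, rfl⟩, rfl⟩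
    exact ⟨w, hw, _, ⟨v, hv, rfl⟩, by abel⟩

end VectorSpace

/-- the dynamic programming (semigroup) property of
`u(t,x) = max_{v ∈ Λ} φ(x + t v)` for a nonempty compact convex `Λ`. -/
theorem maximal_semigroup_property
    (n : ℕ) (Λ : Set (Fin n → ℝ)) (hne : Λ.Nonempty) (hcomp : IsCompact Λ)
    (hconv : Convex ℝ Λ)
    (φ : (Fin n → ℝ) → ℝ) (hφ : Continuous φ)
    (u : ℝ → (Fin n → ℝ) → ℝ)
    (hu : ∀ t x, u t x = sSup ((fun v => φ (x + t • v)) '' Λ)) :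
    ∀ s t : ℝ, 0 ≤ s → 0 ≤ t → ∀ x : Fin n → ℝ,
      u (t + s) x = sSup ((fun v => u t (x + s • v)) '' Λ) := by
  intro s t hs ht x
  have hu' : ∀ t y, u t y = sSup (φ '' (y +ᵥ t • Λ)) := fun t y => by
    rw [hu, image_add_smul_eq_image_vadd_smul]
  have hbdd : BddAbove (φ '' (x +ᵥ (t + s) • Λ)) :=
    (((hcomp.smul (t + s)).vadd x).image hφ).bddAbove
  simp only [hu']
  rw [← hconv.biUnion_add_smul_vadd_smul hs ht x] at hbdd ⊢
  exact csSup_image_biUnion hne (fun _ _ => hne.smul_set.vadd_set) hbdd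
end

section
/- Let X = (X₁,…,Xₙ) be maximally distributed with E[φ(X)] = max_{x∈Λ} φ(x) for a compact convex Λ ⊂ ℝⁿ, and suppose its generating function g(p) = E[X·p] satisfies g(p) = Σᵢ E[Xᵢ pᵢ] for all p ∈ ℝⁿ, where E[Xᵢ pᵢ] = max_{v∈[μ̲ᵢ, μ̄ᵢ]} pᵢ v with μ̄ᵢ = E[Xᵢ], μ̲ᵢ = −E[−Xᵢ]. Then Λ = ∏ᵢ [μ̲ᵢ, μ̄ᵢ], i.e., E[φ(X)] = max_{v ∈ ∏ᵢ [μ̲ᵢ, μ̄ᵢ]} φ(v) for all continuous φ. -/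
/-- if the generating (support) function of a maximal distribution
with compact convex set `Λ` is additive across coordinates, then `Λ` is the
product of the marginal intervals `[μ̲ᵢ, μ̄ᵢ]`, hence
`E[φ(X)] = max_{v ∈ ∏ᵢ [μ̲ᵢ, μ̄ᵢ]} φ(v)` for all continuous `φ`. -/
theorem maximal_additive_generating_function_implies_box
    (n : ℕ) (Λ : Set (Fin n → ℝ)) (hne : Λ.Nonempty) (hcomp : IsCompact Λ)
    (hconv : Convex ℝ Λ)
    (μbar μlow : Fin n → ℝ)
    (hμbar : ∀ i, μbar i = sSup ((fun v => v i) '' Λ))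
    (hμlow : ∀ i, μlow i = -sSup ((fun v => -(v i)) '' Λ))
    (hadd : ∀ p : Fin n → ℝ,
      sSup ((fun v => ∑ i, v i * p i) '' Λ)
        = ∑ i, sSup ((fun v => v i * p i) '' Λ)) :
    Λ = Set.univ.pi (fun i => Set.Icc (μlow i) (μbar i)) ∧
    ∀ φ : (Fin n → ℝ) → ℝ, Continuous φ →
      sSup (φ '' Λ)
        = sSup (φ '' Set.univ.pi (fun i => Set.Icc (μlow i) (μbar i))) := by
  have hmain : Λ = Set.univ.pi (fun i => Set.Icc (μlow i) (μbar i)) := by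
    apply Set.Subset.antisymm
    · intro v hv i _
      constructor
      · rw [hμlow i]
        have : -(v i) ≤ sSup ((fun v => -(v i)) '' Λ) :=
          le_csSup ((hcomp.image ((continuous_apply i).neg)).bddAbove) ⟨v, hv, rfl⟩
        linarith
      · rw [hμbar i]
        exact le_csSup ((hcomp.image (continuous_apply i)).bddAbove) ⟨v, hv, rfl⟩
    · intro x hx
      by_contra hxΛ
      obtain ⟨f, u, hfu, hux⟩ :=
        geometric_hahn_banach_closed_point hconv hcomp.isClosed hxΛ
      set p : Fin n → ℝ := fun i => f (fun j => if i = j then (1:ℝ) else 0) with hp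
      have hfeq : ∀ y : Fin n → ℝ, f y = ∑ i, y i * p i := by
        intro y
        conv_lhs => rw [pi_eq_sum_univ y]
        rw [map_sum]
        refine Finset.sum_congr rfl fun i _ => ?_
        rw [map_smul]; rfl
      -- per-coordinate bound
      have hcoord : ∀ i, x i * p i ≤ sSup ((fun v => v i * p i) '' Λ) := by
        intro i
        have hbdd : BddAbove ((fun v => v i * p i) '' Λ) :=
          (hcomp.image ((continuous_apply i).mul continuous_const)).bddAbove
        rcases le_or_gt 0 (p i) with hpi | hpi
        · -- use point attaining μbar i
          have hS : sSup ((fun v => v i) '' Λ) ∈ ((fun v => v i) '' Λ) :=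
            (hcomp.image (continuous_apply i)).sSup_mem (hne.image _)
          obtain ⟨v₀, hv₀, hv₀i⟩ := hS
          have hxle : x i ≤ v₀ i := by
            have := (hx i trivial).2
            rw [hμbar i, ← hv₀i] at this; exact this
          calc x i * p i ≤ v₀ i * p i := mul_le_mul_of_nonneg_right hxle hpi
            _ ≤ _ := le_csSup hbdd ⟨v₀, hv₀, rfl⟩
        · have hS : sSup ((fun v => -(v i)) '' Λ) ∈ ((fun v => -(v i)) '' Λ) :=
            (hcomp.image ((continuous_apply i).neg)).sSup_mem (hne.image _)
          obtain ⟨v₀, hv₀, hv₀i⟩ := hS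
          have hxge : v₀ i ≤ x i := by
            have := (hx i trivial).1
            rw [hμlow i, ← hv₀i] at this; simpa using this
          calc x i * p i ≤ v₀ i * p i :=
              mul_le_mul_of_nonpos_right hxge hpi.le
            _ ≤ _ := le_csSup hbdd ⟨v₀, hv₀, rfl⟩
      have hsup_le : sSup ((fun v => ∑ i, v i * p i) '' Λ) ≤ u := by
        apply csSup_le (hne.image _)
        rintro _ ⟨v, hv, rfl⟩
        dsimp only
        rw [← hfeq v]; exact (hfu v hv).le
      have : f x ≤ u := by
        rw [hfeq x]
        calc ∑ i, x i * p i ≤ ∑ i, sSup ((fun v => v i * p i) '' Λ) :=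
              Finset.sum_le_sum fun i _ => hcoord i
          _ = sSup ((fun v => ∑ i, v i * p i) '' Λ) := (hadd p).symm
          _ ≤ u := hsup_le
      linarith
  exact ⟨hmain, fun φ _ => by rw [hmain]⟩
end

section
/- Let E be a sublinear expectation and W_{A₁},…,W_{Aₙ} random variables with |W_{Aᵢ}| ≤ κ λ_{Aᵢ} (E-a.s., in the sense E[(|W_{Aᵢ}| − κλ_{Aᵢ})⁺] = 0), where κ = max(|μ̲|, |μ̄|). Then for any random variables ξ₁,…,ξₙ with E[|ξᵢ|] < ∞, E[|Σᵢ ξᵢ W_{Aᵢ}|] ≤ κ E[Σᵢ |ξᵢ| λ_{Aᵢ}]. -/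
/-- If `E` is sublinear-monotone, `f ≥ 0` with `E f = 0`, then `E (g*f) ≤ 0`
for any `g ≥ 0`, since `g f ≤ m f + (1/m) g² f` pointwise and `E (g² f)` is a
fixed real number. -/
theorem key_gf_nonpos {Ω : Type*} (E : (Ω → ℝ) → ℝ)
    (hmono : ∀ X Y : Ω → ℝ, (∀ ω, X ω ≤ Y ω) → E X ≤ E Y)
    (hsubadd : ∀ X Y : Ω → ℝ, E (fun ω => X ω + Y ω) ≤ E X + E Y)
    (hpos : ∀ (X : Ω → ℝ) (l : ℝ), 0 ≤ l → E (fun ω => l * X ω) = l * E X)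
    (f g : Ω → ℝ) (hf : ∀ ω, 0 ≤ f ω) (hg : ∀ ω, 0 ≤ g ω)
    (hEf : E f = 0) : E (fun ω => g ω * f ω) ≤ 0 := by
  set C := E (fun ω => (g ω * g ω) * f ω) with hC
  have hbound : ∀ m : ℝ, 0 < m → E (fun ω => g ω * f ω) ≤ (1/m) * C := by
    intro m hm
    have hpt : ∀ ω, g ω * f ω ≤ m * f ω + (1/m) * ((g ω * g ω) * f ω) := by
      intro ω
      have key : m * (g ω * f ω) ≤ m * (m * f ω) + (g ω * g ω) * f ω := by
        nlinarith [mul_nonneg (hf ω) (sq_nonneg (g ω - m)),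
          mul_nonneg (mul_nonneg hm.le (hg ω)) (hf ω)]
      have hexp : m * (m * f ω + (1/m) * ((g ω * g ω) * f ω))
          = m * (m * f ω) + (g ω * g ω) * f ω := by
        field_simp
      exact le_of_mul_le_mul_left (by rw [hexp]; exact key) hm
    calc E (fun ω => g ω * f ω)
        ≤ E (fun ω => m * f ω + (1/m) * ((g ω * g ω) * f ω)) := hmono _ _ hpt
      _ ≤ E (fun ω => m * f ω) + E (fun ω => (1/m) * ((g ω * g ω) * f ω)) :=
          hsubadd _ _
      _ = m * E f + (1/m) * C := by
          rw [hpos f m hm.le, hpos _ (1/m) (by positivity)]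
      _ = (1/m) * C := by rw [hEf]; ring
  by_contra hcon
  push_neg at hcon
  set ε := E (fun ω => g ω * f ω) with hε
  have hm0 : 0 < (|C| + 1) / ε := by positivity
  have hle := hbound _ hm0
  have h1 : (1 / ((|C| + 1) / ε)) * C = ε * C / (|C| + 1) := by
    field_simp
  rw [h1] at hle
  have hCabs : C ≤ |C| := le_abs_self C
  have h2 : ε * C / (|C| + 1) < ε := by
    rw [div_lt_iff₀ (by positivity)]
    nlinarith [abs_nonneg C]
  linarith

theorem E_sum_le {Ω : Type*} (E : (Ω → ℝ) → ℝ)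
    (hconst : ∀ c : ℝ, E (fun _ => c) = c)
    (hsubadd : ∀ X Y : Ω → ℝ, E (fun ω => X ω + Y ω) ≤ E X + E Y)
    {ι : Type*} (s : Finset ι) (X : ι → Ω → ℝ) :
    E (fun ω => ∑ i ∈ s, X i ω) ≤ ∑ i ∈ s, E (X i) := by
  induction s using Finset.cons_induction with
  | empty => simp [hconst 0]
  | cons a s ha ih =>
      simp only [Finset.sum_cons]
      calc E (fun ω => X a ω + ∑ i ∈ s, X i ω)
          ≤ E (X a) + E (fun ω => ∑ i ∈ s, X i ω) := hsubadd _ _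
        _ ≤ E (X a) + ∑ i ∈ s, E (X i) := by linarith

/-- the continuity estimate for the stochastic integral of a
simple random field with respect to maximally distributed white noise:
`E[|Σᵢ ξᵢ W_{Aᵢ}|] ≤ κ E[Σᵢ |ξᵢ| λ_{Aᵢ}]` with `κ = max(|μ̲|, |μ̄|)`,
using only sublinearity of `E` and the bounds `|W_{Aᵢ}| ≤ κ λ_{Aᵢ}`
(in the sense `E[(|W_{Aᵢ}| − κ λ_{Aᵢ})⁺] = 0`). -/
theorem stochastic_integral_estimate
    (Ω : Type*) (E : (Ω → ℝ) → ℝ)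
    (hmono : ∀ X Y : Ω → ℝ, (∀ ω, X ω ≤ Y ω) → E X ≤ E Y)
    (hconst : ∀ c : ℝ, E (fun _ => c) = c)
    (hsubadd : ∀ X Y : Ω → ℝ, E (fun ω => X ω + Y ω) ≤ E X + E Y)
    (hpos : ∀ (X : Ω → ℝ) (l : ℝ), 0 ≤ l → E (fun ω => l * X ω) = l * E X)
    (n : ℕ) (μlow μbar κ : ℝ) (hκ : κ = max |μlow| |μbar|)
    (lam : Fin n → ℝ) (hlam : ∀ i, 0 ≤ lam i)
    (W : Fin n → Ω → ℝ)
    (hW : ∀ i, E (fun ω => max (|W i ω| - κ * lam i) 0) = 0)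
    (ξ : Fin n → Ω → ℝ) :
    E (fun ω => |∑ i, ξ i ω * W i ω|) ≤ κ * E (fun ω => ∑ i, |ξ i ω| * lam i) := by
  have hκ0 : 0 ≤ κ := by rw [hκ]; positivity
  set f : Fin n → Ω → ℝ := fun i ω => max (|W i ω| - κ * lam i) 0 with hfdef
  set T : Ω → ℝ := fun ω => ∑ i, |ξ i ω| * lam i with hT
  have hpt : ∀ ω, |∑ i, ξ i ω * W i ω| ≤ κ * T ω + ∑ i, |ξ i ω| * f i ω := by
    intro ω
    calc |∑ i, ξ i ω * W i ω|
        ≤ ∑ i, |ξ i ω * W i ω| := Finset.abs_sum_le_sum_abs _ _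
      _ = ∑ i, |ξ i ω| * |W i ω| := by simp [abs_mul]
      _ ≤ ∑ i, |ξ i ω| * (κ * lam i + f i ω) := by
          apply Finset.sum_le_sum
          intro i _
          apply mul_le_mul_of_nonneg_left _ (abs_nonneg _)
          have h1 : |W i ω| - κ * lam i ≤ f i ω := le_max_left _ _
          linarith
      _ = κ * T ω + ∑ i, |ξ i ω| * f i ω := by
          rw [hT, Finset.mul_sum, ← Finset.sum_add_distrib]
          apply Finset.sum_congr rfl
          intro i _
          ring
  have hzero : ∀ i : Fin n, E (fun ω => |ξ i ω| * f i ω) ≤ 0 := by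
    intro i
    exact key_gf_nonpos E hmono hsubadd hpos (f i) (fun ω => |ξ i ω|)
      (fun ω => le_max_right _ _) (fun ω => abs_nonneg _) (hW i)
  calc E (fun ω => |∑ i, ξ i ω * W i ω|)
      ≤ E (fun ω => κ * T ω + ∑ i, |ξ i ω| * f i ω) := hmono _ _ hpt
    _ ≤ E (fun ω => κ * T ω) + E (fun ω => ∑ i, |ξ i ω| * f i ω) := hsubadd _ _
    _ ≤ κ * E T + ∑ i, E (fun ω => |ξ i ω| * f i ω) := by
        rw [hpos T κ hκ0]
        have := E_sum_le E hconst hsubadd Finset.univ (fun i ω => |ξ i ω| * f i ω)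
        linarith
    _ ≤ κ * E T := by
        have hs : ∑ i, E (fun ω => |ξ i ω| * f i ω) ≤ 0 :=
          Finset.sum_nonpos (fun i _ => hzero i)
        linarith
end
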